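/- Under the homogeneous Dawid–Skene model with constant assignment probability q, an infinite sequence of workers, and majority voting using the first M workers: if lim_{M→∞} (1/M)·Σ_{i=1}^M w_i exists and is strictly greater than 1/L, then majority voting is consistent, i.e., for every item j, P(ŷ_j^(M) ≠ y_j) → 0 as M → ∞ (ŷ_j^(M) converges to y_j in probability). -/

import Mathlib

/-!
Fix an item with true label `k` and a wrong label `h`. Given `y = k`, the product formula for the
joint law makes the votes independent, and worker `i` changes `#votes(k) - #votes(h)` by an amount
of absolute value at most `1` and mean `q w_i - q (1 - w_i) / (L - 1)`. Majority voting can only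
err if this difference is `≤ 0` for some `h`. The Cesàro means of the per-worker means tend to
`q (L wlim - 1) / (L - 1) > 0`, so the expected difference grows linearly in `M` while its variance
is at most `M`, and Chebyshev's inequality bounds the error probability by `O(1 / M)`.
-/

open MeasureTheory ProbabilityTheory Real Filter

noncomputable section

namespace CrowdSeq

/-- Conditional law of `Z i j ∈ Fin (L+1)` (`0` = missing) given the true label `y j = k`
under the homogeneous Dawid–Skene model with constant assignment probability `q` and an
infinite sequence of worker accuracies `w`. -/
def condLaw {L : ℕ} (q : ℝ) (w : ℕ → ℝ) (i : ℕ) (k : Fin L) (h : Fin (L + 1)) : ℝ :=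
  if hz : h = 0 then 1 - q
  else q * (if h.pred hz = k then w i else (1 - w i) / ((L : ℝ) - 1))

end CrowdSeq

open Finset

section ProductMass

variable {ι α : Type*} [Fintype ι] [DecidableEq ι] [Fintype α]

theorem sum_mul_sub_sq_eq_sub_sq (p g : α → ℝ) (hp : ∑ z, p z = 1) :
    ∑ z, p z * (g z - ∑ x, p x * g x) ^ 2 = ∑ z, p z * g z ^ 2 - (∑ z, p z * g z) ^ 2 := by
  set m := ∑ x, p x * g x
  have h z : p z * (g z - m) ^ 2 = p z * g z ^ 2 - 2 * m * (p z * g z) + m ^ 2 * p z := by ring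
  simp only [h, sum_add_distrib, sum_sub_distrib, ← mul_sum, hp]
  ring

theorem sum_prod_mul_apply (p : ι → α → ℝ) (hp : ∀ i, ∑ z, p i z = 1) (a : ι) (f : α → ℝ) :
    ∑ v : ι → α, (∏ i, p i (v i)) * f (v a) = ∑ z, p a z * f z := by
  have h (v : ι → α) :
      (∏ i, p i (v i)) * f (v a) = ∏ i, p i (v i) * if i = a then f (v i) else 1 := by
    rw [prod_mul_distrib, prod_ite_eq' univ a (fun i => f (v i)), if_pos (mem_univ a)]
  simp_rw [h, ← Fintype.prod_sum fun i z => p i z * if i = a then f z else 1]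
  rw [prod_eq_single a (fun i _ hi => by simp only [if_neg hi, mul_one, hp]) (by simp)]
  simp

theorem sum_prod_mul_apply_mul_apply (p : ι → α → ℝ) (hp : ∀ i, ∑ z, p i z = 1) {a b : ι}
    (hab : a ≠ b) (f g : α → ℝ) :
    ∑ v : ι → α, (∏ i, p i (v i)) * (f (v a) * g (v b))
      = (∑ z, p a z * f z) * ∑ z, p b z * g z := by
  have h (v : ι → α) : (∏ i, p i (v i)) * (f (v a) * g (v b))
      = ∏ i, p i (v i) * (if i = a then f (v i) else 1) * if i = b then g (v i) else 1 := by
    rw [prod_mul_distrib, prod_mul_distrib, prod_ite_eq' univ a (fun i => f (v i)),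
      prod_ite_eq' univ b (fun i => g (v i)), if_pos (mem_univ a), if_pos (mem_univ b), mul_assoc]
  simp_rw [h, ← Fintype.prod_sum fun i z =>
    p i z * (if i = a then f z else 1) * if i = b then g z else 1]
  rw [prod_eq_mul a b hab (fun i _ hi => by simp only [if_neg hi.1, if_neg hi.2, mul_one, hp])
    (by simp) (by simp)]
  simp [hab, hab.symm]

theorem sum_prod_mul_sum_sq_of_sum_mul_eq_zero (p f : ι → α → ℝ) (hp : ∀ i, ∑ z, p i z = 1)
    (hf : ∀ i, ∑ z, p i z * f i z = 0) :
    ∑ v : ι → α, (∏ i, p i (v i)) * (∑ i, f i (v i)) ^ 2 = ∑ i, ∑ z, p i z * f i z ^ 2 := by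
  have hcross a b : ∑ v : ι → α, (∏ i, p i (v i)) * (f a (v a) * f b (v b))
      = if a = b then ∑ z, p a z * f a z ^ 2 else 0 := by
    split_ifs with hab
    · subst hab; simp_rw [← sq]; exact sum_prod_mul_apply p hp a fun z => f a z ^ 2
    · rw [sum_prod_mul_apply_mul_apply p hp hab, hf, zero_mul]
  have hexpand (v : ι → α) : (∏ i, p i (v i)) * (∑ i, f i (v i)) ^ 2
      = ∑ a, ∑ b, (∏ i, p i (v i)) * (f a (v a) * f b (v b)) := by
    rw [sq, sum_mul_sum, mul_sum]
    simp_rw [mul_sum]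
  rw [sum_congr rfl fun v _ => hexpand v, sum_comm]
  refine sum_congr rfl fun a _ => ?_
  rw [sum_comm]
  simp_rw [hcross, sum_ite_eq, if_pos (mem_univ _)]

/-- Chebyshev's inequality for `∑ i, g i (v i)` when `v` has the product law `∏ i, p i (v i)`. -/
theorem sum_prod_filter_sum_nonpos_le (p g : ι → α → ℝ) (hp0 : ∀ i z, 0 ≤ p i z)
    (hp : ∀ i, ∑ z, p i z = 1) (hm : 0 < ∑ i, ∑ z, p i z * g i z) :
    ∑ v ∈ univ.filter (fun v : ι → α => ∑ i, g i (v i) ≤ 0), ∏ i, p i (v i)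
      ≤ (∑ i, ∑ z, p i z * g i z ^ 2) / (∑ i, ∑ z, p i z * g i z) ^ 2 := by
  set m := ∑ i, ∑ z, p i z * g i z
  set f : ι → α → ℝ := fun i z => g i z - ∑ x, p i x * g i x
  have hP (v : ι → α) : 0 ≤ ∏ i, p i (v i) := prod_nonneg fun i _ => hp0 i (v i)
  have hf_sum (v : ι → α) : ∑ i, f i (v i) = ∑ i, g i (v i) - m := sum_sub_distrib ..
  have hf_mean i : ∑ z, p i z * f i z = 0 := by
    simp only [f, mul_sub, sum_sub_distrib, ← sum_mul, hp, one_mul, sub_self]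
  have hdev (v : ι → α) (hv : ∑ i, g i (v i) ≤ 0) : 1 ≤ (∑ i, f i (v i)) ^ 2 / m ^ 2 := by
    rw [one_le_div (by positivity), hf_sum]
    nlinarith
  calc ∑ v ∈ univ.filter (fun v : ι → α => ∑ i, g i (v i) ≤ 0), ∏ i, p i (v i)
      ≤ ∑ v ∈ univ.filter (fun v : ι → α => ∑ i, g i (v i) ≤ 0),
          (∏ i, p i (v i)) * ((∑ i, f i (v i)) ^ 2 / m ^ 2) :=
        sum_le_sum fun v hv => le_mul_of_one_le_right (hP v) (hdev v (mem_filter.1 hv).2)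
    _ ≤ ∑ v : ι → α, (∏ i, p i (v i)) * ((∑ i, f i (v i)) ^ 2 / m ^ 2) :=
        sum_le_sum_of_subset_of_nonneg (filter_subset _ _) fun v _ _ => by
          have := hP v; positivity
    _ = (∑ i, ∑ z, p i z * f i z ^ 2) / m ^ 2 := by
        simp_rw [← mul_div_assoc, ← sum_div, sum_prod_mul_sum_sq_of_sum_mul_eq_zero p f hp hf_mean]
    _ ≤ (∑ i, ∑ z, p i z * g i z ^ 2) / m ^ 2 := by
        refine div_le_div_of_nonneg_right (sum_le_sum fun i _ => ?_) (sq_nonneg m)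
        rw [sum_mul_sub_sq_eq_sub_sq _ _ (hp i)]
        nlinarith

end ProductMass

theorem toReal_measure_eq_sum_prod {Ω α β : Type*} [MeasurableSpace Ω] {μ : Measure Ω}
    [IsFiniteMeasure μ] [Inhabited α] [MeasurableSpace α] [MeasurableSingletonClass α]
    [MeasurableSpace β] [MeasurableSingletonClass β] {Y : Ω → β} {X : ℕ → Ω → α}
    (hY : Measurable Y) (hX : ∀ i, Measurable (X i)) {k : β} {c : ℝ} {p : ℕ → α → ℝ}
    (hlaw : ∀ (M : ℕ) (h : ℕ → α),
      (μ {ω | Y ω = k ∧ ∀ i < M, X i ω = h i}).toReal = c * ∏ i ∈ range M, p i (h i))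
    (M : ℕ) (s : Finset (Fin M → α)) :
    (μ {ω | Y ω = k ∧ (fun i : Fin M => X i ω) ∈ s}).toReal
      = c * ∑ v ∈ s, ∏ i : Fin M, p i (v i) := by
  set F : Ω → Fin M → α := fun ω i => X i ω
  have hF : Measurable F := measurable_pi_lambda _ fun i => hX i
  have hYk : MeasurableSet {ω | Y ω = k} := hY (measurableSet_singleton k)
  have hpoint (v : Fin M → α) : (μ ({ω | Y ω = k} ∩ F ⁻¹' {v})).toReal
      = c * ∏ i : Fin M, p i (v i) := by
    let h : ℕ → α := fun n => if hn : n < M then v ⟨n, hn⟩ else default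
    have hset : {ω | Y ω = k} ∩ F ⁻¹' {v} = {ω | Y ω = k ∧ ∀ i < M, X i ω = h i} := by
      ext ω
      simp only [Set.mem_inter_iff, Set.mem_ofPred_eq, Set.mem_preimage, Set.mem_singleton_iff,
        funext_iff, Fin.forall_iff, F, h]
      grind
    rw [hset, hlaw, ← Fin.prod_univ_eq_prod_range]
    simp [h]
  have hunion : μ {ω | Y ω = k ∧ F ω ∈ s} = ∑ v ∈ s, μ ({ω | Y ω = k} ∩ F ⁻¹' {v}) := by
    have := sum_measure_preimage_singleton (μ := μ.restrict {ω | Y ω = k}) s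
      fun v _ => hF (measurableSet_singleton v)
    simp only [Measure.restrict_apply' hYk, Set.inter_comm _ {ω | Y ω = k}] at this
    exact this.symm
  rw [hunion, ENNReal.toReal_sum fun v _ => measure_ne_top μ _, mul_sum]
  exact sum_congr rfl fun v _ => hpoint v

theorem tendsto_avg_affine {u : ℕ → ℝ} {l : ℝ}
    (hu : Tendsto (fun M : ℕ => (M : ℝ)⁻¹ * ∑ i ∈ range M, u i) atTop (nhds l)) (a b : ℝ) :
    Tendsto (fun M : ℕ => (M : ℝ)⁻¹ * ∑ i ∈ range M, (a * u i - b)) atTop (nhds (a * l - b)) := by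
  refine ((hu.const_mul a).sub_const b).congr' ?_
  filter_upwards [eventually_ne_atTop 0] with M hM
  rw [sum_sub_distrib, ← mul_sum, sum_const, card_range, nsmul_eq_mul]
  field_simp

theorem tendsto_const_mul_div_sq_nhds_zero {m : ℕ → ℝ} {c : ℝ}
    (hm : Tendsto (fun M : ℕ => (M : ℝ)⁻¹ * m M) atTop (nhds c)) (hc : c ≠ 0) (C : ℝ) :
    Tendsto (fun M : ℕ => C * M / m M ^ 2) atTop (nhds 0) := by
  have h := ((tendsto_inv_atTop_zero.comp tendsto_natCast_atTop_atTop).const_mul C).div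
    (hm.pow 2) (pow_ne_zero 2 hc)
  rw [mul_zero, zero_div] at h
  refine h.congr' ?_
  filter_upwards [eventually_ne_atTop 0] with M hM
  simp only [Pi.div_apply, Function.comp_apply]
  field_simp

namespace CrowdSeq

variable {L : ℕ} {q : ℝ} {w : ℕ → ℝ}

theorem condLaw_zero (i : ℕ) (k : Fin L) : condLaw q w i k 0 = 1 - q := by
  simp [condLaw]

theorem condLaw_succ (i : ℕ) (k g : Fin L) :
    condLaw q w i k g.succ = q * if g = k then w i else (1 - w i) / ((L : ℝ) - 1) := by
  simp [condLaw, Fin.succ_ne_zero]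

theorem condLaw_nonneg (hq0 : 0 ≤ q) (hq1 : q ≤ 1) {i : ℕ} (hw0 : 0 ≤ w i) (hw1 : w i ≤ 1)
    (k : Fin L) (z : Fin (L + 1)) : 0 ≤ condLaw q w i k z := by
  have hL : (1 : ℝ) ≤ L := by exact_mod_cast k.pos
  rcases Fin.eq_zero_or_eq_succ z with rfl | ⟨g, rfl⟩
  · rw [condLaw_zero]; linarith
  · rw [condLaw_succ]
    have : 0 ≤ (1 - w i) / ((L : ℝ) - 1) := div_nonneg (by linarith) (by linarith)
    split_ifs <;> positivity

theorem sum_condLaw (hL : 2 ≤ L) (i : ℕ) (k : Fin L) : ∑ z, condLaw q w i k z = 1 := by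
  have hL1 : (L : ℝ) - 1 ≠ 0 := by
    have : (2 : ℝ) ≤ L := by exact_mod_cast hL
    linarith
  rw [Fin.sum_univ_succ, condLaw_zero]
  simp_rw [condLaw_succ, ← mul_sum]
  rw [Fintype.sum_eq_add_sum_compl k, if_pos rfl,
    sum_congr rfl fun g hg => if_neg (by simpa using hg), sum_const, card_compl, card_singleton,
    Fintype.card_fin, nsmul_eq_mul, Nat.cast_sub (by omega), Nat.cast_one]
  field_simp
  ring

def voteDiff (k h : Fin L) (z : Fin (L + 1)) : ℝ :=
  (if z = k.succ then 1 else 0) - if z = h.succ then 1 else 0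

def meanVoteDiff (L : ℕ) (q a : ℝ) : ℝ :=
  q * a - q * (1 - a) / ((L : ℝ) - 1)

def notAhead (M : ℕ) (k h : Fin L) : Finset (Fin M → Fin (L + 1)) :=
  univ.filter fun v => ∑ i, voteDiff k h (v i) ≤ 0

theorem meanVoteDiff_pos (hL : 2 ≤ L) (hq : 0 < q) {a : ℝ} (ha : 1 / (L : ℝ) < a) :
    0 < meanVoteDiff L q a := by
  have hL1 : (0 : ℝ) < L - 1 := by
    have : (2 : ℝ) ≤ L := by exact_mod_cast hL
    linarith
  have haL : 1 < a * L := (div_lt_iff₀ (by linarith)).1 ha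
  have h : meanVoteDiff L q a = q * (a * L - 1) / (L - 1) := by
    unfold meanVoteDiff
    field_simp
    ring
  rw [h]
  exact div_pos (mul_pos hq (by linarith)) hL1

theorem tendsto_avg_meanVoteDiff {l : ℝ}
    (hw : Tendsto (fun M : ℕ => (M : ℝ)⁻¹ * ∑ i ∈ range M, w i) atTop (nhds l)) :
    Tendsto (fun M : ℕ => (M : ℝ)⁻¹ * ∑ i ∈ range M, meanVoteDiff L q (w i)) atTop
      (nhds (meanVoteDiff L q l)) := by
  have h (a : ℝ) :
      meanVoteDiff L q a = (q + q / ((L : ℝ) - 1)) * a - q / ((L : ℝ) - 1) := by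
    unfold meanVoteDiff
    ring
  simp only [h]
  exact tendsto_avg_affine hw _ _

theorem sum_condLaw_mul_voteDiff {k h : Fin L} (hkh : k ≠ h) (i : ℕ) :
    ∑ z, condLaw q w i k z * voteDiff k h z = meanVoteDiff L q (w i) := by
  simp only [voteDiff, mul_sub, mul_ite, mul_one, mul_zero, sum_sub_distrib, sum_ite_eq',
    mem_univ, if_true, condLaw_succ, if_neg hkh.symm, meanVoteDiff]
  ring

theorem voteDiff_sq_le_one (k h : Fin L) (z : Fin (L + 1)) : voteDiff k h z ^ 2 ≤ 1 := by
  unfold voteDiff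
  split_ifs <;> norm_num

theorem sum_condLaw_mul_voteDiff_sq_le (hL : 2 ≤ L) (hq0 : 0 ≤ q) (hq1 : q ≤ 1) {i : ℕ}
    (hw0 : 0 ≤ w i) (hw1 : w i ≤ 1) (k h : Fin L) :
    ∑ z, condLaw q w i k z * voteDiff k h z ^ 2 ≤ 1 :=
  calc ∑ z, condLaw q w i k z * voteDiff k h z ^ 2 ≤ ∑ z, condLaw q w i k z :=
        sum_le_sum fun z _ => mul_le_of_le_one_right (condLaw_nonneg hq0 hq1 hw0 hw1 k z)
          (voteDiff_sq_le_one k h z)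
    _ = 1 := sum_condLaw hL i k

theorem sum_notAhead_prod_condLaw_le (hL : 2 ≤ L) (hq0 : 0 ≤ q) (hq1 : q ≤ 1)
    (hw0 : ∀ i, 0 ≤ w i) (hw1 : ∀ i, w i ≤ 1) {k h : Fin L} (hkh : k ≠ h) {M : ℕ}
    (hm : 0 < ∑ i ∈ range M, meanVoteDiff L q (w i)) :
    ∑ v ∈ notAhead M k h, ∏ i : Fin M, condLaw q w i k (v i)
      ≤ M / (∑ i ∈ range M, meanVoteDiff L q (w i)) ^ 2 := by
  have hmean : ∑ i : Fin M, ∑ z, condLaw q w i k z * voteDiff k h z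
      = ∑ i ∈ range M, meanVoteDiff L q (w i) := by
    simp_rw [sum_condLaw_mul_voteDiff hkh]
    exact Fin.sum_univ_eq_sum_range (fun i => meanVoteDiff L q (w i)) M
  have := sum_prod_filter_sum_nonpos_le (fun i : Fin M => condLaw q w i k)
    (fun _ => voteDiff k h) (fun i => condLaw_nonneg hq0 hq1 (hw0 i) (hw1 i) k)
    (fun i => sum_condLaw hL i k) (hmean ▸ hm)
  rw [hmean] at this
  refine this.trans (div_le_div_of_nonneg_right ?_ (sq_nonneg _))
  calc ∑ i : Fin M, ∑ z, condLaw q w i k z * voteDiff k h z ^ 2 ≤ ∑ _i : Fin M, (1 : ℝ) :=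
        sum_le_sum fun i _ => sum_condLaw_mul_voteDiff_sq_le hL hq0 hq1 (hw0 i) (hw1 i) k h
    _ = M := by simp

theorem toReal_measure_majority_ne_le {Ω : Type*} [MeasurableSpace Ω] {μ : Measure Ω}
    [IsProbabilityMeasure μ] {L : ℕ} (hL : 2 ≤ L) {q : ℝ} {w : ℕ → ℝ} (hq0 : 0 ≤ q)
    (hq1 : q ≤ 1) (hw0 : ∀ i, 0 ≤ w i) (hw1 : ∀ i, w i ≤ 1) {Y : Ω → Fin L}
    {X : ℕ → Ω → Fin (L + 1)} (hY : Measurable Y) (hX : ∀ i, Measurable (X i))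
    {pri : Fin L → ℝ}
    (hlaw : ∀ (k : Fin L) (M : ℕ) (h : ℕ → Fin (L + 1)),
      (μ {ω | Y ω = k ∧ ∀ i < M, X i ω = h i}).toReal
        = pri k * ∏ i ∈ range M, condLaw q w i k (h i))
    {M : ℕ} {Yhat : Ω → Fin L}
    (hYhat : ∀ ω (k : Fin L), (∑ i ∈ range M, if X i ω = k.succ then (1 : ℝ) else 0)
        ≤ ∑ i ∈ range M, if X i ω = (Yhat ω).succ then (1 : ℝ) else 0)
    (hm : 0 < ∑ i ∈ range M, meanVoteDiff L q (w i)) :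
    (μ {ω | Yhat ω ≠ Y ω}).toReal
      ≤ L ^ 2 * M / (∑ i ∈ range M, meanVoteDiff L q (w i)) ^ 2 := by
  set E : Fin L × Fin L → Set Ω :=
    fun kh => {ω | Y ω = kh.1 ∧ (fun i : Fin M => X i ω) ∈ notAhead M kh.1 kh.2}
  have hsub : {ω | Yhat ω ≠ Y ω} ⊆ ⋃ kh ∈ univ.offDiag, E kh := by
    intro ω hω
    refine Set.mem_biUnion (x := (Y ω, Yhat ω)) (by simpa [eq_comm] using hω) ⟨rfl, ?_⟩
    simp only [notAhead, mem_filter, mem_univ, true_and, voteDiff, sum_sub_distrib]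
    rw [Fin.sum_univ_eq_sum_range (fun i => if X i ω = (Y ω).succ then (1 : ℝ) else 0),
      Fin.sum_univ_eq_sum_range (fun i => if X i ω = (Yhat ω).succ then (1 : ℝ) else 0)]
    exact sub_nonpos.2 (hYhat ω (Y ω))
  have hpri (k : Fin L) : pri k ≤ 1 := by
    -- `hlaw` at `M = 0` says `pri k = P(Y = k)`.
    have h0 := hlaw k 0 fun _ => 0
    rw [prod_range_zero, mul_one] at h0
    exact h0 ▸ measureReal_le_one
  have hE (kh : Fin L × Fin L) (hkh : kh ∈ univ.offDiag) :
      (μ (E kh)).toReal ≤ M / (∑ i ∈ range M, meanVoteDiff L q (w i)) ^ 2 := by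
    rw [toReal_measure_eq_sum_prod hY hX (hlaw kh.1)]
    refine (mul_le_of_le_one_left ?_ (hpri kh.1)).trans
      (sum_notAhead_prod_condLaw_le hL hq0 hq1 hw0 hw1 (mem_offDiag.1 hkh).2.2 hm)
    exact sum_nonneg fun v _ => prod_nonneg fun i _ => condLaw_nonneg hq0 hq1 (hw0 i) (hw1 i) _ _
  calc (μ {ω | Yhat ω ≠ Y ω}).toReal ≤ ∑ kh ∈ univ.offDiag, (μ (E kh)).toReal :=
        (measureReal_mono hsub (measure_ne_top μ _)).trans (measureReal_biUnion_finset_le _ _)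
    _ ≤ ∑ kh ∈ univ.offDiag, (M / (∑ i ∈ range M, meanVoteDiff L q (w i)) ^ 2 : ℝ) := sum_le_sum hE
    _ ≤ L ^ 2 * M / (∑ i ∈ range M, meanVoteDiff L q (w i)) ^ 2 := by
        rw [sum_const, nsmul_eq_mul, mul_div_assoc]
        gcongr
        exact_mod_cast (card_le_univ _).trans_eq (by simp [sq])

end CrowdSeq

theorem mv_consistent
    {Ω : Type*} [MeasurableSpace Ω] (μ : Measure Ω) [IsProbabilityMeasure μ]
    {N L : ℕ} (hL : 2 ≤ L)
    (y : Fin N → Ω → Fin L) (Z : ℕ → Fin N → Ω → Fin (L + 1))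
    (hym : ∀ j, Measurable (y j)) (hZm : ∀ i j, Measurable (Z i j))
    (pri : Fin L → ℝ) (q : ℝ) (w : ℕ → ℝ)
    (hq0 : 0 < q) (hq1 : q ≤ 1)
    (hw0 : ∀ i, 0 ≤ w i) (hw1 : ∀ i, w i ≤ 1)
    (hlaw : ∀ (j : Fin N) (k : Fin L) (M : ℕ) (h : ℕ → Fin (L + 1)),
      (μ {ω | y j ω = k ∧ ∀ i < M, Z i j ω = h i}).toReal
        = pri k * ∏ i ∈ Finset.range M, CrowdSeq.condLaw q w i k (h i))
    (yhatM : ℕ → Fin N → Ω → Fin L)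
    (hyhat : ∀ (M : ℕ) (j : Fin N) (ω : Ω) (k : Fin L),
      (∑ i ∈ Finset.range M, if Z i j ω = k.succ then (1 : ℝ) else 0)
        ≤ ∑ i ∈ Finset.range M, if Z i j ω = (yhatM M j ω).succ then (1 : ℝ) else 0)
    (wlim : ℝ)
    (hwlim : Tendsto (fun M : ℕ => (M : ℝ)⁻¹ * ∑ i ∈ Finset.range M, w i)
      atTop (nhds wlim))
    (hwgt : 1 / (L : ℝ) < wlim) :
    ∀ j : Fin N,
      Tendsto (fun M : ℕ => (μ {ω | yhatM M j ω ≠ y j ω}).toReal) atTop (nhds 0) := by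
  intro j
  have hc := CrowdSeq.meanVoteDiff_pos hL hq0 hwgt
  have hmean := CrowdSeq.tendsto_avg_meanVoteDiff (L := L) (q := q) hwlim
  refine squeeze_zero' (Eventually.of_forall fun M => ENNReal.toReal_nonneg) ?_
    (tendsto_const_mul_div_sq_nhds_zero hmean hc.ne' (L ^ 2))
  filter_upwards [hmean.eventually (eventually_gt_nhds hc)] with M hM
  exact CrowdSeq.toReal_measure_majority_ne_le hL hq0.le hq1 hw0 hw1 (hym j) (fun i => hZm i j)
    (hlaw j) (hyhat M j) (pos_of_mul_pos_right hM (by positivity))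

end
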